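/- If S ⊆ {1, …, d} is invariant, then the set S ∩ AN_Y is also invariant. -/

import Mathlib

/-- Nodes of the graph: the environment node `E`, predictor nodes `V j` for
`j ∈ {1, …, d}` (represented by `Fin d`), and the response node `Y`. -/
inductive Node (d : ℕ) : Type where
  | E : Node d
  | V : Fin d → Node d
  | Y : Node d
deriving DecidableEq

/-- A directed acyclic graph on `{E} ∪ {1, …, d} ∪ {Y}` in which `E` has no
parents (`E` is exogenous). -/
structure CGraph (d : ℕ) where
  adj : Node d → Node d → Prop
  acyclic : ∀ v, ¬ Relation.TransGen adj v v
  exogenous : ∀ v, ¬ adj v Node.E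

namespace CGraph

variable {d : ℕ} (G : CGraph d)

/-- Undirected adjacency: an edge between `u` and `v` in either direction. -/
def Edge (u v : Node d) : Prop := G.adj u v ∨ G.adj v u

/-- `p` is a path between `a` and `b`: a duplicate-free list of nodes starting
at `a`, ending at `b`, with consecutive nodes adjacent (in either direction). -/
def IsPath (p : List (Node d)) (a b : Node d) : Prop :=
  p.head? = some a ∧ p.getLast? = some b ∧ p.Nodup ∧ p.Chain' G.Edge

/-- `x` is a (strict) descendant of `v`. -/
def Desc (v x : Node d) : Prop := Relation.TransGen G.adj v x

/-- The consecutive triple `u, m, w` on a path blocks the path given `C`: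
either `m` is a non-collider lying in `C`, or `m` is a collider such that
neither `m` nor any of its descendants lies in `C`. -/
def BlockedAt (C : Set (Node d)) (u m w : Node d) : Prop :=
  (¬ (G.adj u m ∧ G.adj w m) ∧ m ∈ C) ∨
  ((G.adj u m ∧ G.adj w m) ∧ m ∉ C ∧ ∀ x, G.Desc m x → x ∉ C)

/-- A path `p` is blocked by `C` if some consecutive triple on it blocks it. -/
def Blocked (C : Set (Node d)) (p : List (Node d)) : Prop :=
  ∃ q u m w r, p = q ++ u :: m :: w :: r ∧ G.BlockedAt C u m w

/-- `a` and `b` are d-separated given `C`: every path between them is blocked. -/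
def DSep (a b : Node d) (C : Set (Node d)) : Prop :=
  ∀ p, G.IsPath p a b → G.Blocked C p

/-- `S ⊆ {1, …, d}` is invariant if `E` and `Y` are d-separated given `S`. -/
def Invariant (S : Set (Fin d)) : Prop := G.DSep Node.E Node.Y (Node.V '' S)

/-- `S` is minimally invariant if it is invariant and no strict subset of `S`
is invariant. -/
def MinInvariant (S : Set (Fin d)) : Prop :=
  G.Invariant S ∧ ∀ S', S' ⊂ S → ¬ G.Invariant S'

/-- `S_AS`: the union of all minimally invariant sets. -/
def SAS : Set (Fin d) := ⋃₀ {S | G.MinInvariant S}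

/-- `S_ICP`: the intersection of all invariant sets (`∅` if there are none). -/
def SICP : Set (Fin d) :=
  {j | (∃ S, G.Invariant S) ∧ ∀ S, G.Invariant S → j ∈ S}

/-- `S_AS^m`: the union of all minimally invariant sets of cardinality `≤ m`. -/
def SASm (m : ℕ) : Set (Fin d) := ⋃₀ {S | G.MinInvariant S ∧ S.ncard ≤ m}

/-- The parents of `Y` among `{1, …, d}`. -/
def paY : Set (Fin d) := {j | G.adj (Node.V j) Node.Y}

/-- The children of `E` among `{1, …, d}`. -/
def chE : Set (Fin d) := {j | G.adj Node.E (Node.V j)}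

/-- The ancestors of `Y` among `{1, …, d}`. -/
def anY : Set (Fin d) := {j | Relation.TransGen G.adj (Node.V j) Node.Y}

/-- `PA(A)`: the union of the parent sets of the elements of `A ⊆ {1, …, d}`. -/
def paOf (A : Set (Fin d)) : Set (Fin d) := {j | ∃ i ∈ A, G.adj (Node.V j) (Node.V i)}

end CGraph

/-!
Blocking at a collider survives shrinking the conditioning set. A non-collider `m ∈ S` that
is not an ancestor of `Y` has no descendant in `S ∩ AN_Y`. One of its two path edges points
away from `m`; following the path in that direction as long as the edges keep pointing
forward cannot reach `E` (it has no parents) nor `Y` (as `m ∉ AN_Y`), so it stops at a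
collider below `m`, and that collider blocks the path given `S ∩ AN_Y`.
-/

namespace CGraph

variable {d : ℕ} (G : CGraph d)

theorem not_transGen_E (a : Node d) : ¬ Relation.TransGen G.adj a Node.E := fun h =>
  let ⟨_, _, hE⟩ := Relation.TransGen.tail'_iff.1 h
  G.exogenous _ hE

variable {G}

theorem BlockedAt.symm {C : Set (Node d)} {u m w : Node d} (h : G.BlockedAt C u m w) :
    G.BlockedAt C w m u := by
  unfold BlockedAt at h ⊢
  rwa [and_comm (a := G.adj w m)]

theorem Blocked.reverse {C : Set (Node d)} {p : List (Node d)} (h : G.Blocked C p) :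
    G.Blocked C p.reverse := by
  obtain ⟨q, u, m, w, r, rfl, hb⟩ := h
  exact ⟨r.reverse, w, m, u, q.reverse, by simp, hb.symm⟩

theorem IsPath.reverse {p : List (Node d)} {a b : Node d} (hp : G.IsPath p a b) :
    G.IsPath p.reverse b a := by
  obtain ⟨hhead, hlast, hnodup, hchain⟩ := hp
  exact ⟨by rwa [List.head?_reverse], by rwa [List.getLast?_reverse],
    List.nodup_reverse.2 hnodup, List.isChain_reverse.2 (hchain.imp fun _ _ => Or.symm)⟩

theorem IsPath.edge {q r : List (Node d)} {a b u v : Node d}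
    (hp : G.IsPath (q ++ u :: v :: r) a b) : G.Edge u v :=
  (List.isChain_append_cons_cons.1 hp.2.2.2).2.1

theorem blocked_of_adj_of_not_transGen {C : Set (Node d)} {a b : Node d} :
    ∀ {r q : List (Node d)} {m w : Node d}, G.IsPath (q ++ m :: w :: r) a b → G.adj m w →
      ¬ Relation.TransGen G.adj m b →
      (∀ x, Relation.ReflTransGen G.adj m x → x ∉ C) → G.Blocked C (q ++ m :: w :: r)
  | [], q, m, w, hp, hmw, hmb, _ => by
    obtain rfl : w = b := by simpa using hp.2.1
    exact absurd (.single hmw) hmb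
  | x :: r, q, m, w, hp, hmw, hmb, hC => by
    have hp' := List.append_cons q m _ ▸ hp
    rcases hp'.edge with hwx | hxw
    · simpa using blocked_of_adj_of_not_transGen hp' hwx (fun hwb => hmb (.head hmw hwb))
        (fun y hy => hC y (.head hmw hy))
    · exact ⟨q, m, w, x, r, rfl, Or.inr ⟨⟨hmw, hxw⟩, hC w (.single hmw),
        fun y hy => hC y (Relation.TransGen.head hmw hy).to_reflTransGen⟩⟩

theorem blocked_of_not_collider {C : Set (Node d)} {a b u m w : Node d}
    {q r : List (Node d)} (hp : G.IsPath (q ++ u :: m :: w :: r) a b)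
    (hnc : ¬ (G.adj u m ∧ G.adj w m)) (hma : ¬ Relation.TransGen G.adj m a)
    (hmb : ¬ Relation.TransGen G.adj m b)
    (hC : ∀ x, Relation.ReflTransGen G.adj m x → x ∉ C) :
    G.Blocked C (q ++ u :: m :: w :: r) := by
  have hp' := List.append_cons q u _ ▸ hp
  rcases hp.edge with hum | hmu
  · rcases hp'.edge with hmw | hwm
    · simpa using blocked_of_adj_of_not_transGen hp' hmw hmb hC
    · exact absurd ⟨hum, hwm⟩ hnc
  · have hrev : (q ++ u :: m :: w :: r).reverse =
        (r.reverse ++ [w]) ++ m :: u :: q.reverse := by simp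
    have h := blocked_of_adj_of_not_transGen (hrev ▸ hp.reverse) hmu hma hC
    simpa [← hrev] using h.reverse

end CGraph

/-- if `S ⊆ {1, …, d}` is invariant, then `S ∩ AN_Y` is also
invariant. -/
theorem invariant_inter_ancestors {d : ℕ} (G : CGraph d) (S : Set (Fin d))
    (hS : G.Invariant S) :
    G.Invariant (S ∩ G.anY) := by
  intro p hp
  obtain ⟨q, u, m, w, r, rfl, hb⟩ := hS p hp
  rcases hb with ⟨hnc, j, hjS, rfl⟩ | ⟨hcol, hm, hdesc⟩
  · by_cases hj : j ∈ G.anY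
    · exact ⟨q, u, _, w, r, rfl, Or.inl ⟨hnc, j, ⟨hjS, hj⟩, rfl⟩⟩
    · refine G.blocked_of_not_collider hp hnc (G.not_transGen_E _) hj ?_
      rintro x hx ⟨k, ⟨-, hk⟩, rfl⟩
      exact hj (.trans_right hx hk)
  · have hsub : Node.V '' (S ∩ G.anY) ⊆ Node.V '' S := Set.image_mono Set.inter_subset_left
    exact ⟨q, u, m, w, r, rfl, Or.inr ⟨hcol, fun h => hm (hsub h),
      fun x hx h => hdesc x hx (hsub h)⟩⟩
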